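/- arXiv:math/0610692 — 5 statements merged into one kernel-verified Lean document; each statement's English description precedes it below -/
import Mathlib

section
/- Let p be a prime and let k be an integral domain of characteristic p. For a p-typical Witt vector x ∈ 𝕎 k one has φ(x) = x if and only if every coefficient x.coeff n lies in the range of the canonical ring homomorphism ℤ/pℤ → k; equivalently, the kernel of the additive endomorphism φ − id of 𝕎 k is exactly the range of the functorial map 𝕎(ℤ/pℤ) → 𝕎 k induced by ℤ/pℤ → k. -/
open WittVector Polynomial

lemma aux_pow_p (p : ℕ) [Fact p.Prime] (k : Type*) [CommRing k] [IsDomain k] [CharP k p]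
    (a : k) : a ^ p = a ↔ a ∈ Set.range (ZMod.castHom (dvd_refl p) k) := by
  constructor
  · intro h
    classical
    have hp : 0 < p := (Fact.out : p.Prime).pos
    set f : k[X] := X ^ p - X with hf
    have hfne : f ≠ 0 := by
      have : f.natDegree = p := by
        rw [hf]
        compute_degree!
        simp [(Fact.out : p.Prime).one_lt.ne]
      intro h0
      rw [h0] at this
      simp at this
      omega
    have hnd : f.natDegree = p := by
      rw [hf]; compute_degree!; simp [(Fact.out : p.Prime).one_lt.ne]
    have hinj : Function.Injective (ZMod.castHom (dvd_refl p) k) :=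
      ZMod.castHom_injective k
    have himg : (Finset.univ.image (ZMod.castHom (dvd_refl p) k)) ⊆ f.roots.toFinset := by
      intro b hb
      simp only [Finset.mem_image] at hb
      obtain ⟨c, -, rfl⟩ := hb
      rw [Multiset.mem_toFinset, mem_roots hfne]
      simp only [hf, IsRoot, eval_sub, eval_pow, eval_X]
      rw [← map_pow, ZMod.pow_card, sub_self]
    have hcard1 : (Finset.univ.image (ZMod.castHom (dvd_refl p) k)).card = p := by
      rw [Finset.card_image_of_injective _ hinj, Finset.card_univ, ZMod.card]
    have hcard2 : f.roots.toFinset.card ≤ p := by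
      calc f.roots.toFinset.card ≤ Multiset.card f.roots := f.roots.toFinset_card_le
        _ ≤ f.natDegree := f.card_roots'
        _ = p := hnd
    have heq : (Finset.univ.image (ZMod.castHom (dvd_refl p) k)) = f.roots.toFinset :=
      Finset.eq_of_subset_of_card_le himg (by omega)
    have ha : a ∈ f.roots.toFinset := by
      rw [Multiset.mem_toFinset, mem_roots hfne]
      simp [hf, IsRoot, h, sub_self]
    rw [← heq] at ha
    simp only [Finset.mem_image] at ha
    obtain ⟨c, -, rfl⟩ := ha
    exact ⟨c, rfl⟩
  · rintro ⟨b, rfl⟩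
    rw [← map_pow, ZMod.pow_card]

/-- For a prime `p` and an integral domain `k` of characteristic `p`, a `p`-typical Witt
vector `x ∈ 𝕎 k` is fixed by the Frobenius `φ` if and only if all its coefficients lie in
the image of `ℤ/pℤ → k`; equivalently, the kernel of the additive endomorphism `φ - id`
of `𝕎 k` is exactly the range of the functorial map `𝕎 (ℤ/pℤ) → 𝕎 k`. -/
theorem stmt0 (p : ℕ) [Fact p.Prime] (k : Type*) [CommRing k] [IsDomain k] [CharP k p] :
    (∀ x : WittVector p k,
      WittVector.frobenius x = x ↔
        ∀ n : ℕ, x.coeff n ∈ Set.range (ZMod.castHom (dvd_refl p) k)) ∧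
    {y : WittVector p k | WittVector.frobenius y - y = 0} =
      Set.range (WittVector.map (p := p) (ZMod.castHom (dvd_refl p) k)) := by
  have key : ∀ x : WittVector p k, WittVector.frobenius x = x ↔
      ∀ n : ℕ, x.coeff n ∈ Set.range (ZMod.castHom (dvd_refl p) k) := by
    intro x
    rw [WittVector.ext_iff]
    simp only [coeff_frobenius_charP]
    exact forall_congr' fun n => aux_pow_p p k _
  refine ⟨key, ?_⟩
  ext y
  simp only [Set.mem_setOf_eq, sub_eq_zero, key y, Set.mem_range]
  constructor
  · intro h
    choose b hb using h
    exact ⟨WittVector.mk p b, WittVector.ext fun n => by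
      rw [WittVector.map_coeff, WittVector.coeff_mk, hb]⟩
  · rintro ⟨z, rfl⟩ n
    rw [WittVector.map_coeff]
    exact ⟨z.coeff n, rfl⟩
end

section
/- Let p be a prime and let k be a commutative ring of characteristic p on which the Artin–Schreier map a ↦ a^p − a is surjective. Then the additive endomorphism φ − id of the ring of p-typical Witt vectors 𝕎 k is surjective, where φ is the Witt-vector Frobenius. -/
open WittVector

section Aux

variable {p : ℕ} [hp : Fact p.Prime] {k : Type*} [CommRing k]

private lemma aux_vsh_coeff_lt (n : ℕ) (z : WittVector p k) {i : ℕ} (hi : i < n) :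
    (verschiebung^[n] z).coeff i = 0 := by
  induction n generalizing i z with
  | zero => omega
  | succ n ih =>
    rw [Function.iterate_succ_apply']
    cases i with
    | zero => exact verschiebung_coeff_zero _
    | succ i =>
      rw [verschiebung_coeff_succ]
      exact ih _ (by omega)

private lemma aux_exists_vsh (n : ℕ) (w : WittVector p k) (h : ∀ i < n, w.coeff i = 0) :
    ∃ z : WittVector p k, w = verschiebung^[n] z := by
  refine ⟨WittVector.mk p fun i => w.coeff (i + n), ?_⟩
  ext i
  rcases lt_or_ge i n with hi | hi
  · rw [h i hi, aux_vsh_coeff_lt n _ hi]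
  · obtain ⟨j, rfl⟩ : ∃ j, i = j + n := ⟨i - n, by omega⟩
    rw [iterate_verschiebung_coeff]
    rfl

private lemma aux_vsh_coeff_top (n : ℕ) (z : WittVector p k) :
    (verschiebung^[n] z).coeff n = z.coeff 0 := by
  simpa using iterate_verschiebung_coeff (p := p) z n 0

/-- If `t` has vanishing coefficients below `n`, then adding `t` leaves coefficients below `n`
unchanged and adds `t.coeff n` to the `n`-th coefficient. -/
private lemma aux_add_coeff (n : ℕ) (x t : WittVector p k) (ht : ∀ i < n, t.coeff i = 0) :
    (∀ i < n, (x + t).coeff i = x.coeff i) ∧ (x + t).coeff n = x.coeff n + t.coeff n := by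
  have hinit_t : init n t = 0 := by
    ext i
    simp only [init, select, coeff_mk, zero_coeff]
    split_ifs with hi
    · exact ht i hi
    · rfl
  have hlow : ∀ i < n, (x + t).coeff i = x.coeff i := by
    intro i hi
    have h1 : init n (x + t) = init n x := by
      rw [init_add, hinit_t, add_zero, init_init]
    have h2 := congrArg (fun w : WittVector p k => w.coeff i) h1
    simpa only [init, select, coeff_mk, if_pos hi] using h2
  refine ⟨hlow, ?_⟩
  -- decompose x = init n x + tail n x
  have hx : x + t = init n x + (tail n x + t) := by
    rw [← add_assoc, init_add_tail]
  have htail : ∀ i < n, (tail n x).coeff i = 0 := by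
    intro i hi
    simp only [tail, select, coeff_mk]
    rw [if_neg (by omega)]
  obtain ⟨z₁, hz₁⟩ := aux_exists_vsh n _ htail
  obtain ⟨z₂, hz₂⟩ := aux_exists_vsh n _ ht
  have hw : tail n x + t = verschiebung^[n] (z₁ + z₂) := by
    rw [hz₁, hz₂]
    exact (iterate_map_add verschiebung n z₁ z₂).symm
  have hw_low : ∀ i < n, (tail n x + t).coeff i = 0 := by
    intro i hi
    rw [hw]; exact aux_vsh_coeff_lt n _ hi
  have hdisj : ∀ m, (init n x).coeff m = 0 ∨ (tail n x + t).coeff m = 0 := by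
    intro m
    rcases lt_or_ge m n with hm | hm
    · exact Or.inr (hw_low m hm)
    · left
      simp only [init, select, coeff_mk]
      rw [if_neg (by omega)]
  have hcoeff : (x + t).coeff n = (init n x).coeff n + (tail n x + t).coeff n := by
    rw [hx]
    exact coeff_add_of_disjoint n _ _ hdisj
  have h1 : (init n x).coeff n = 0 := by
    simp only [init, select, coeff_mk]
    rw [if_neg (by omega)]
  have h2 : (tail n x + t).coeff n = x.coeff n + t.coeff n := by
    rw [hw, aux_vsh_coeff_top, add_coeff_zero, ← aux_vsh_coeff_top n z₁, ← aux_vsh_coeff_top n z₂,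
      ← hz₁, ← hz₂]
    congr 1
    simp only [tail, select, coeff_mk]
    rw [if_pos le_rfl]
  rw [hcoeff, h1, h2, zero_add]

variable [CharP k p]

/-- `(φ x - x).coeff n` only depends on the coefficients of `x` up to `n`. -/
private lemma aux_depends (n : ℕ) (x x' : WittVector p k)
    (h : ∀ i ≤ n, x.coeff i = x'.coeff i) :
    (frobenius x - x).coeff n = (frobenius x' - x').coeff n := by
  have hinit : init (n + 1) x = init (n + 1) x' := by
    ext i
    simp only [init, select, coeff_mk]
    split_ifs with hi
    · exact h i (by omega)
    · rfl
  have hfro : init (n + 1) (frobenius x) = init (n + 1) (frobenius x') := by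
    ext i
    simp only [init, select, coeff_mk]
    split_ifs with hi
    · rw [coeff_frobenius_charP, coeff_frobenius_charP, h i (by omega)]
    · rfl
  have key : init (n + 1) (frobenius x - x) = init (n + 1) (frobenius x' - x') := by
    rw [init_sub, hfro, hinit, ← init_sub]
  have h2 := congrArg (fun w : WittVector p k => w.coeff n) key
  simpa only [init, select, coeff_mk, if_pos (Nat.lt_succ_self n)] using h2

end Aux

/-- If `k` is a commutative ring of characteristic `p` on which the Artin–Schreier map
`a ↦ a^p - a` is surjective, then `φ - id` is surjective on the ring of `p`-typical
Witt vectors `𝕎 k`, where `φ` is the Witt-vector Frobenius. -/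
theorem stmt1 (p : ℕ) [Fact p.Prime] (k : Type*) [CommRing k] [CharP k p]
    (hAS : ∀ b : k, ∃ a : k, a ^ p - a = b) :
    Function.Surjective (fun y : WittVector p k => WittVector.frobenius y - y) := by
  have hp0 : p ≠ 0 := (Fact.out : p.Prime).ne_zero
  intro y
  -- successive approximation: a sequence `X n` solving the equation in coefficients `< n`
  -- the perturbation added at stage `n`
  let pert : WittVector p k → ℕ → WittVector p k := fun x n =>
    verschiebung^[n] (WittVector.mk p fun i => if i = 0 then
      Classical.choose (hAS (y.coeff n - (WittVector.frobenius x - x).coeff n)) else 0)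
  let X : ℕ → WittVector p k := fun n => Nat.rec 0 (fun n x => x + pert x n) n
  have hX_succ : ∀ n, X (n + 1) = X n + pert (X n) n := fun n => rfl
  have hpert_low : ∀ (x : WittVector p k) (n : ℕ) (i : ℕ), i < n → (pert x n).coeff i = 0 :=
    fun x n i hi => aux_vsh_coeff_lt n _ hi
  have hpert_top : ∀ (x : WittVector p k) (n : ℕ), (pert x n).coeff n =
      Classical.choose (hAS (y.coeff n - (WittVector.frobenius x - x).coeff n)) := by
    intro x n
    rw [aux_vsh_coeff_top]
    rfl
  -- coherence of the sequence
  have hcoh : ∀ n i, i < n → (X (n + 1)).coeff i = (X n).coeff i := by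
    intro n i hi
    rw [hX_succ]
    exact (aux_add_coeff n (X n) _ (hpert_low (X n) n)).1 i hi
  have hcoh' : ∀ m n, n ≤ m → ∀ i < n, (X m).coeff i = (X n).coeff i := by
    intro m
    induction m with
    | zero => intro n hn i hi; omega
    | succ m ih =>
      intro n hn i hi
      rcases Nat.lt_or_ge n (m + 1) with h | h
      · rw [hcoh m i (by omega), ih n (by omega) i hi]
      · have : n = m + 1 := by omega
        subst this; rfl
  -- invariant: `X n` solves the equation in coefficients `< n`
  have hinv : ∀ n, ∀ i < n, (WittVector.frobenius (X n) - X n).coeff i = y.coeff i := by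
    intro n
    induction n with
    | zero => intro i hi; omega
    | succ n ih =>
      intro i hi
      rcases Nat.lt_or_ge i n with h | h
      · -- coefficients below n are unchanged
        have hagree : ∀ j ≤ i, (X (n + 1)).coeff j = (X n).coeff j :=
          fun j hj => hcoh n j (by omega)
        rw [aux_depends i _ _ hagree]
        exact ih i h
      · have hi' : i = n := by omega
        subst hi'
        -- the key computation at level i
        set a := Classical.choose (hAS (y.coeff i - (WittVector.frobenius (X i) - X i).coeff i))
          with ha_def
        have ha : a ^ p - a = y.coeff i - (WittVector.frobenius (X i) - X i).coeff i :=
          Classical.choose_spec (hAS (y.coeff i - (WittVector.frobenius (X i) - X i).coeff i))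
        set s := pert (X i) i with hs_def
        have hs_low : ∀ j < i, s.coeff j = 0 := hpert_low (X i) i
        have hs_top : s.coeff i = a := hpert_top (X i) i
        -- φ(x+s) - (x+s) = (φ x - x) + (φ s - s)
        have hsplit : WittVector.frobenius (X (i + 1)) - X (i + 1) =
            (WittVector.frobenius (X i) - X i) + (WittVector.frobenius s - s) := by
          rw [hX_succ, map_add]
          ring
        -- t := φ s - s is supported in degrees ≥ i with top coefficient a^p - a
        have hfs_low : ∀ j < i, (WittVector.frobenius s).coeff j = 0 := by
          intro j hj
          rw [coeff_frobenius_charP, hs_low j hj, zero_pow hp0]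
        obtain ⟨z₁, hz₁⟩ := aux_exists_vsh i _ hfs_low
        obtain ⟨z₂, hz₂⟩ := aux_exists_vsh i s hs_low
        have ht_eq : WittVector.frobenius s - s = verschiebung^[i] (z₁ - z₂) := by
          rw [hz₁, hz₂]
          exact (iterate_map_sub verschiebung i z₁ z₂).symm
        have ht_low : ∀ j < i, (WittVector.frobenius s - s).coeff j = 0 := by
          intro j hj
          rw [ht_eq]; exact aux_vsh_coeff_lt i _ hj
        have ht_top : (WittVector.frobenius s - s).coeff i = a ^ p - a := by
          have hz₁0 : z₁.coeff 0 = a ^ p := by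
            rw [← aux_vsh_coeff_top i z₁, ← hz₁, coeff_frobenius_charP, hs_top]
          have hz₂0 : z₂.coeff 0 = a := by
            rw [← aux_vsh_coeff_top i z₂, ← hz₂, hs_top]
          rw [ht_eq, aux_vsh_coeff_top, ← hz₁0, ← hz₂0]
          exact map_sub (WittVector.constantCoeff (p := p)) z₁ z₂
        rw [hsplit, (aux_add_coeff i _ _ ht_low).2, ht_top, ha]
        ring
  -- the limit
  refine ⟨WittVector.mk p fun i => (X (i + 1)).coeff i, ?_⟩
  simp only
  ext n
  have hagree : ∀ i ≤ n, (WittVector.mk p fun i => (X (i + 1)).coeff i).coeff i =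
      (X (n + 1)).coeff i := by
    intro i hi
    show (X (i + 1)).coeff i = (X (n + 1)).coeff i
    exact (hcoh' (n + 1) (i + 1) (by omega) i (by omega)).symm
  rw [aux_depends n _ _ hagree]
  exact hinv (n + 1) n (by omega)
end

section
/- Let G be a finite group acting by ring automorphisms on a commutative ring Λ, and let W be a Λ-module equipped with an action of G by additive automorphisms such that g • (λ • w) = (g • λ) • (g • w) for all g ∈ G, λ ∈ Λ, w ∈ W. Let α ∈ Λ and set ε := ∑_{g∈G} g • α. Then ε is G-invariant, the map w ↦ ε • w is a G-equivariant additive endomorphism of W, and for every n ≥ 1 the endomorphism it induces on the group cohomology Hⁿ(G, W) (with W regarded as a ℤ-linear representation of G) is zero. -/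
/-! Contract the last variable of a cochain against the coefficients `(x₁⋯xₘτ) • α`:
`h(x) = ∑_τ ((x₁⋯xₘτ) • α) • f(x, τ)`. The coefficients only see the product of the entries,
so they are unchanged by the inner faces; semilinearity moves them through the first face, and
the substitution `τ ↦ xₘτ` matches the last face. What is left over is the degenerate face
`f(x₁, …, xₘ₊₁)` weighted by `∑_τ (x₁⋯xₘ₊₁τ) • α = ε`, giving the homotopy formula
`h(∂f) = ∂h + (-1)ᵐ ε f`. For a cocycle `f` this exhibits `ε f` as a coboundary. -/

/-- The inhomogeneous coboundary of an `r`-cochain `f : Gʳ → W`: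
`∂f(g₁,…,g_{r+1}) = g₁ • f(g₂,…,g_{r+1})
  + ∑_{j=1}^{r} (−1)^j f(g₁,…,g_{j−1}, g_j·g_{j+1}, g_{j+2},…,g_{r+1})
  + (−1)^{r+1} f(g₁,…,g_r)`. -/
def coboundary {G W : Type*} [Group G] [AddCommGroup W] [DistribMulAction G W]
    {r : ℕ} (f : (Fin r → G) → W) : (Fin (r + 1) → G) → W :=
  fun g =>
    g 0 • f (fun i => g i.succ)
      + ∑ j : Fin r, ((-1 : ℤ) ^ ((j : ℕ) + 1)) • f (Fin.contractNth j.castSucc (· * ·) g)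
      + ((-1 : ℤ) ^ (r + 1)) • f (fun i => g i.castSucc)

namespace Fin

variable {β : Type*}

theorem tail_snoc {n : ℕ} (g : Fin (n + 1) → β) (τ : β) :
    tail (snoc g τ : Fin (n + 2) → β) = snoc (tail g) τ := by
  ext i
  refine lastCases ?_ (fun i => ?_) i
  · rw [tail, succ_last, snoc_last, snoc_last]
  · rw [tail, succ_castSucc, snoc_castSucc, snoc_castSucc, tail]

theorem contractNth_castSucc_castSucc_snoc {n : ℕ} (op : β → β → β) (j : Fin n)
    (g : Fin (n + 1) → β) (τ : β) :
    contractNth j.castSucc.castSucc op (snoc g τ) = snoc (contractNth j.castSucc op g) τ := by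
  ext k
  refine lastCases ?_ (fun k => ?_) k
  · rw [contractNth_apply_of_gt _ _ _ _ (by simp), succ_last, snoc_last, snoc_last]
  · rcases lt_trichotomy (k : ℕ) j with h | h | h
    · rw [contractNth_apply_of_lt _ _ _ _ (by simpa using h), snoc_castSucc,
        snoc_castSucc, contractNth_apply_of_lt _ _ _ _ (by simpa using h)]
    · rw [contractNth_apply_of_eq _ _ _ _ (by simpa using h), snoc_castSucc,
        succ_castSucc, snoc_castSucc, snoc_castSucc,
        contractNth_apply_of_eq _ _ _ _ (by simpa using h)]
    · rw [contractNth_apply_of_gt _ _ _ _ (by simpa using h), succ_castSucc, snoc_castSucc,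
        snoc_castSucc, contractNth_apply_of_gt _ _ _ _ (by simpa using h)]

theorem contractNth_last_castSucc_snoc {n : ℕ} (op : β → β → β) (g : Fin (n + 1) → β) (τ : β) :
    contractNth (last n).castSucc op (snoc g τ) = snoc (init g) (op (g (last n)) τ) := by
  ext k
  refine lastCases ?_ (fun k => ?_) k
  · rw [contractNth_apply_of_eq _ _ _ _ (by simp), succ_last, snoc_last, snoc_last, snoc_castSucc]
  · rw [contractNth_apply_of_lt _ _ _ _ (by simp), snoc_castSucc, snoc_castSucc, init]

theorem partialProd_contractNth_castSucc_last {G : Type*} [Monoid G] {n : ℕ} (j : Fin n)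
    (g : Fin (n + 1) → G) :
    partialProd (contractNth j.castSucc (· * ·) g) (last n) = partialProd g (last (n + 1)) := by
  rw [partialProd_contractNth, Function.comp_apply,
    succAbove_of_le_castSucc _ _ (by simp [le_def]), succ_last]

end Fin

open Fin

theorem coboundary_snoc {G W : Type*} [Group G] [AddCommGroup W] [DistribMulAction G W] {m : ℕ}
    (f : (Fin (m + 1) → G) → W) (g : Fin (m + 1) → G) (τ : G) :
    coboundary f (snoc g τ) =
      g 0 • f (snoc (tail g) τ)
        + ∑ j : Fin m, ((-1 : ℤ) ^ ((j : ℕ) + 1)) • f (snoc (contractNth j.castSucc (· * ·) g) τ)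
        + ((-1 : ℤ) ^ (m + 1)) • f (snoc (init g) (g (last m) * τ))
        + ((-1 : ℤ) ^ (m + 2)) • f g := by
  rw [coboundary, sum_univ_castSucc]
  have htail : (fun i => (snoc g τ : Fin (m + 2) → G) i.succ) = snoc (tail g) τ := tail_snoc g τ
  have hinit : (fun i => (snoc g τ : Fin (m + 2) → G) i.castSucc) = g := init_snoc _ _
  simp only [snoc_apply_zero, htail, hinit, val_castSucc, val_last,
    contractNth_castSucc_castSucc_snoc, contractNth_last_castSucc_snoc, add_assoc]

theorem sum_mul_smul {G Λ : Type*} [Group G] [Fintype G] [AddCommMonoid Λ] [SMul G Λ]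
    (a : G) (α : Λ) : ∑ τ : G, (a * τ) • α = ∑ τ : G, τ • α :=
  Fintype.sum_equiv (Equiv.mulLeft a) _ _ fun _ => rfl

theorem smul_sum_smul {G Λ : Type*} [Group G] [Fintype G] [AddCommMonoid Λ]
    [DistribMulAction G Λ] (a : G) (α : Λ) : a • ∑ τ : G, τ • α = ∑ τ : G, τ • α := by
  simp only [Finset.smul_sum, smul_smul, sum_mul_smul]

theorem coboundary_zsmul {G W : Type*} [Group G] [AddCommGroup W] [DistribMulAction G W] {m : ℕ}
    (n : ℤ) (h : (Fin m → G) → W) : coboundary (n • h) = n • coboundary h := by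
  ext g
  simp only [coboundary, Pi.smul_apply, smul_add, Finset.smul_sum, smul_comm n]

section TraceHomotopy

variable {G Λ W : Type*} [Group G] [Fintype G] [Semiring Λ] [MulAction G Λ]
  [AddCommGroup W] [Module Λ W]

def traceHomotopy (α : Λ) {m : ℕ} (f : (Fin (m + 1) → G) → W) (x : Fin m → G) : W :=
  ∑ τ : G, ((partialProd x (last m) * τ) • α) • f (snoc x τ)

theorem traceHomotopy_zero (α : Λ) {m : ℕ} :
    traceHomotopy α (0 : (Fin (m + 1) → G) → W) = 0 := by
  ext x
  simp [traceHomotopy]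

variable [DistribMulAction G W]

theorem traceHomotopy_coboundary
    (hsemi : ∀ (g : G) (l : Λ) (w : W), g • (l • w) = (g • l) • (g • w))
    (α : Λ) {m : ℕ} (f : (Fin (m + 1) → G) → W) (g : Fin (m + 1) → G) :
    traceHomotopy α (coboundary f) g =
      coboundary (traceHomotopy α f) g + (-1 : ℤ) ^ m • (∑ τ : G, τ • α) • f g := by
  set c : G → Λ := fun τ => (partialProd g (last (m + 1)) * τ) • α
  have hhead : ∑ τ, c τ • g 0 • f (snoc (tail g) τ) = g 0 • traceHomotopy α f (tail g) := by
    have hprod : partialProd g (last (m + 1)) = g 0 * partialProd (tail g) (last m) := by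
      rw [← succ_last, partialProd_succ']
    simp only [traceHomotopy, Finset.smul_sum, hsemi, smul_smul, c, hprod, mul_assoc]
  have hmiddle : ∑ τ, c τ • ∑ j : Fin m,
        ((-1 : ℤ) ^ ((j : ℕ) + 1)) • f (snoc (contractNth j.castSucc (· * ·) g) τ) =
      ∑ j : Fin m, ((-1 : ℤ) ^ ((j : ℕ) + 1)) •
        traceHomotopy α f (contractNth j.castSucc (· * ·) g) := by
    simp only [traceHomotopy, Finset.smul_sum, partialProd_contractNth_castSucc_last, c]
    rw [Finset.sum_comm]
    simp only [smul_comm (M := Λ) (N := ℤ)]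
  have hlast : ∑ τ, c τ • ((-1 : ℤ) ^ (m + 1)) • f (snoc (init g) (g (last m) * τ)) =
      ((-1 : ℤ) ^ (m + 1)) • traceHomotopy α f (init g) := by
    have hprod : partialProd g (last (m + 1)) = partialProd (init g) (last m) * g (last m) := by
      rw [← succ_last, partialProd_succ, partialProd_init]
    rw [traceHomotopy, Finset.smul_sum]
    refine Fintype.sum_equiv (Equiv.mulLeft (g (last m))) _ _ fun τ => ?_
    rw [smul_comm, Equiv.coe_mulLeft, ← mul_assoc, ← hprod]
  have htrace :
      ∑ τ, c τ • ((-1 : ℤ) ^ (m + 2)) • f g = (-1 : ℤ) ^ m • (∑ τ : G, τ • α) • f g := by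
    rw [← Finset.sum_smul, ← smul_comm, pow_add, neg_one_sq, mul_one, sum_mul_smul]
  simp only [traceHomotopy, coboundary_snoc, smul_add, Finset.sum_add_distrib]
  rw [hhead, hmiddle, hlast, htrace]
  rfl

end TraceHomotopy

/-- Let a finite group `G` act by ring automorphisms on a commutative ring `Λ`, and let
`W` be a `Λ`-module with a semilinear additive `G`-action.  For `α ∈ Λ` set
`ε := ∑ g ∈ G, g • α`.  Then `ε` is `G`-invariant, `w ↦ ε • w` is a `G`-equivariant
additive endomorphism of `W`, and the endomorphism it induces on the group cohomology
`Hⁿ(G, W)` is zero for every `n ≥ 1`: the `ε`-multiple of every inhomogeneous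
`n`-cocycle is an inhomogeneous coboundary. -/
theorem stmt7 (G : Type*) [Group G] [Fintype G]
    (Λ : Type*) [CommRing Λ] [MulSemiringAction G Λ]
    (W : Type*) [AddCommGroup W] [Module Λ W] [DistribMulAction G W]
    (hsemi : ∀ (g : G) (l : Λ) (w : W), g • (l • w) = (g • l) • (g • w))
    (α ε : Λ) (hε : ε = ∑ g : G, g • α) :
    (∀ g : G, g • ε = ε) ∧
    (∀ (g : G) (w : W), ε • (g • w) = g • (ε • w)) ∧
    (∀ w w' : W, ε • (w + w') = ε • w + ε • w') ∧
    (∀ (m : ℕ) (f : (Fin (m + 1) → G) → W), coboundary f = 0 →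
      ∃ h : (Fin m → G) → W, (fun g => ε • f g) = coboundary h) := by
  subst hε
  refine ⟨fun g => smul_sum_smul g α, fun g w => by rw [hsemi, smul_sum_smul],
    fun w w' => smul_add _ w w',
    fun m f hf => ⟨(-1 : ℤ) ^ (m + 1) • traceHomotopy α f, funext fun g => ?_⟩⟩
  have hhomotopy := traceHomotopy_coboundary hsemi α f g
  rw [hf, traceHomotopy_zero, Pi.zero_apply, eq_comm, add_eq_zero_iff_neg_eq'] at hhomotopy
  rw [coboundary_zsmul, Pi.smul_apply, ← hhomotopy, smul_neg, smul_smul, ← pow_add,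
    Odd.neg_one_pow ⟨m, by ring⟩, neg_one_smul, neg_neg]
end

section
/- Let R be a commutative ring, p a prime number, and u, v ∈ R elements with u^p · v ∈ pR. Suppose that every element of R is congruent to a p-th power modulo u^p·R (for every x there exist y, z with x = y^p + u^p·z) and that every element of R is congruent to a p-th power modulo v·R. Then every element of R is congruent to a p-th power modulo pR: for every a ∈ R there exist w, z ∈ R with a = w^p + p·z. Moreover one may take w = b + u·d, where a = b^p + u^p·c and c = d^p + v·e. -/
theorem exists_add_pow_prime_add_mul_of_dvd {R : Type*} [CommRing R] {p : ℕ} (hp : p.Prime)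
    {u v : R} (huv : (p : R) ∣ u ^ p * v) (b d e : R) :
    ∃ z : R, b ^ p + u ^ p * (d ^ p + v * e) = (b + u * d) ^ p + p * z := by
  obtain ⟨q, hq⟩ := huv
  obtain ⟨r, hr⟩ := exists_add_pow_prime_eq hp b (u * d)
  refine ⟨q * e - b * (u * d) * r, ?_⟩
  calc b ^ p + u ^ p * (d ^ p + v * e) = b ^ p + (u * d) ^ p + u ^ p * v * e := by
        rw [mul_pow]; ring
    _ = (b + u * d) ^ p + p * (q * e - b * (u * d) * r) := by rw [hr, hq]; ring

/-- Bootstrapping surjectivity of Frobenius modulo `p`: if `u^p * v ∈ pR`, every element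
of `R` is a `p`-th power modulo `u^p·R` and every element is a `p`-th power modulo
`v·R`, then every element is a `p`-th power modulo `pR`; moreover one may take
`w = b + u * d` where `a = b^p + u^p * c` and `c = d^p + v * e`. -/
theorem stmt12 {R : Type*} [CommRing R] (p : ℕ) (hp : p.Prime) (u v : R)
    (huv : (p : R) ∣ u ^ p * v)
    (h1 : ∀ x : R, ∃ y z : R, x = y ^ p + u ^ p * z)
    (h2 : ∀ x : R, ∃ y z : R, x = y ^ p + v * z) :
    (∀ a : R, ∃ w z : R, a = w ^ p + p * z) ∧
    (∀ a b c d e : R, a = b ^ p + u ^ p * c → c = d ^ p + v * e →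
      ∃ z : R, a = (b + u * d) ^ p + p * z) := by
  have explicit : ∀ a b c d e : R, a = b ^ p + u ^ p * c → c = d ^ p + v * e →
      ∃ z : R, a = (b + u * d) ^ p + p * z := by
    rintro a b c d e rfl rfl
    exact exists_add_pow_prime_add_mul_of_dvd hp huv b d e
  refine ⟨fun a => ?_, explicit⟩
  obtain ⟨b, c, hbc⟩ := h1 a
  obtain ⟨d, e, hde⟩ := h2 c
  obtain ⟨z, hz⟩ := explicit a b c d e hbc hde
  exact ⟨b + u * d, z, hz⟩
end

section
/- Let p be a prime, k a commutative ring, and v a valuation on k with values in a linearly ordered commutative group with zero Γ₀ (multiplicative notation). Let x, y ∈ 𝕎 k be p-typical Witt vectors and n a natural number such that v(x.coeff i) ≤ 1 and v(y.coeff i) ≤ 1 for all i ≤ n. Then v((x·y).coeff n) ≤ (max_{i≤n} v(x.coeff i)) · (max_{j≤n} v(y.coeff j)). -/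
/-!
Every monomial of the Witt multiplication polynomial `wittMul p n` involves at least one variable
of each factor, since the polynomial vanishes when either factor is set to zero, and it only
involves the coordinates of index `≤ n`. Evaluating it at integral coordinates, each monomial
therefore has valuation at most `v (x.coeff i) * v (y.coeff j)` for some `i, j ≤ n`, and the
integer coefficients and the ultrametric inequality do the rest.
-/

open MvPolynomial

theorem MvPolynomial.coeff_eq_zero_of_killCompl_eq_zero {R σ τ : Type*} [CommSemiring R]
    {f : σ → τ} (hf : Function.Injective f) {φ : MvPolynomial τ R} (h : killCompl hf φ = 0)
    {d : τ →₀ ℕ} (hd : ↑d.support ⊆ Set.range f) : φ.coeff d = 0 := by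
  rw [← d.mapDomain_comapDomain f hf hd, ← coeff_killCompl hf, h, coeff_zero]

theorem Finsupp.prod_pow_le_mul_of_le_one {σ Γ₀ : Type*} [LinearOrderedCommMonoidWithZero Γ₀]
    {d : σ →₀ ℕ} {w : σ → Γ₀} (hw : ∀ r ∈ d.support, w r ≤ 1) {s t : σ}
    (hs : s ∈ d.support) (ht : t ∈ d.support) (hst : s ≠ t) :
    (d.prod fun r e => w r ^ e) ≤ w s * w t := by
  classical
  calc (d.prod fun r e => w r ^ e) = ∏ r ∈ d.support, w r ^ d r := rfl
    _ ≤ ∏ r ∈ {s, t}, w r ^ d r :=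
      Finset.prod_le_prod_of_subset_of_le_one' (Finset.insert_subset hs (by simpa using ht))
        fun r hr _ => pow_le_one' (hw r hr) _
    _ = w s ^ d s * w t ^ d t := Finset.prod_pair hst
    _ ≤ w s * w t := mul_le_mul'
      (pow_le_of_le_one zero_le (hw s hs) (Finsupp.mem_support_iff.mp hs))
      (pow_le_of_le_one zero_le (hw t ht) (Finsupp.mem_support_iff.mp ht))

theorem Valuation.map_aeval_int_le {k σ Γ₀ : Type*} [CommRing k]
    [LinearOrderedCommGroupWithZero Γ₀] (v : Valuation k Γ₀) (u : σ → k)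
    (φ : MvPolynomial σ ℤ) {γ : Γ₀}
    (h : ∀ d ∈ φ.support, (d.prod fun s e => v (u s) ^ e) ≤ γ) :
    v (aeval u φ) ≤ γ := by
  rw [φ.as_sum, map_sum]
  refine v.map_sum_le fun d hd => ?_
  have hcoeff : v (algebraMap ℤ k (φ.coeff d)) ≤ 1 := by
    rw [eq_intCast]
    exact intCast_mem v.integer _
  rw [aeval_monomial, v.map_mul, map_finsuppProd, ← one_mul γ]
  simp only [map_pow]
  exact mul_le_mul' hcoeff (h d hd)

namespace WittVector

variable (p : ℕ) [Fact p.Prime]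

theorem aeval_wittMul_eq_zero {R : Type*} [CommRing R] (g : Fin 2 × ℕ → R) (a : Fin 2)
    (hg : ∀ i, g (a, i) = 0) (n : ℕ) : aeval g (wittMul p n) = 0 := by
  have hg' : g = Function.uncurry
      ![(mk p fun i => g (0, i)).coeff, (mk p fun i => g (1, i)).coeff] := by
    ext ⟨b, i⟩
    fin_cases b <;> rfl
  have hmk : mk p (fun i => g (a, i)) = 0 := by
    ext i
    simp [hg]
  rw [hg', ← peval, ← mul_coeff]
  match a, hmk with
  | 0, hmk => rw [hmk, zero_mul, zero_coeff]
  | 1, hmk => rw [hmk, mul_zero, zero_coeff]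

theorem exists_mem_support_of_mem_support_wittMul {n : ℕ} (a : Fin 2)
    {d : Fin 2 × ℕ →₀ ℕ} (hd : d ∈ (wittMul p n).support) :
    ∃ i, (a, i) ∈ d.support := by
  by_contra! h
  refine mem_support_iff.mp hd (coeff_eq_zero_of_killCompl_eq_zero
    (f := ((↑) : {s : Fin 2 × ℕ // s.1 ≠ a} → Fin 2 × ℕ)) Subtype.val_injective ?_ ?_)
  · refine aeval_wittMul_eq_zero p _ a (fun i => ?_) n
    simp
  · intro s hs
    exact ⟨⟨s, fun hsa => h s.2 (hsa ▸ hs)⟩, rfl⟩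

theorem le_of_mem_support_wittMul {n : ℕ} {d : Fin 2 × ℕ →₀ ℕ}
    (hd : d ∈ (wittMul p n).support) {s : Fin 2 × ℕ} (hs : s ∈ d.support) : s.2 ≤ n := by
  have := wittMul_vars p n ((mem_vars_iff_mem_support s).2 ⟨d, hd, hs⟩)
  simp only [Finset.mem_product, Finset.mem_range] at this
  omega

end WittVector

/-- Truncated valuation estimate for products of Witt vectors, integral case:
if `v (x.coeff i) ≤ 1` and `v (y.coeff i) ≤ 1` for all `i ≤ n`, then
`v ((x*y).coeff n) ≤ (max_{i ≤ n} v (x.coeff i)) * (max_{j ≤ n} v (y.coeff j))`. -/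
theorem stmt15 (p : ℕ) [Fact p.Prime] {k : Type*} [CommRing k]
    {Γ₀ : Type*} [LinearOrderedCommGroupWithZero Γ₀] (v : Valuation k Γ₀)
    (x y : WittVector p k) (n : ℕ)
    (hx : ∀ i ≤ n, v (x.coeff i) ≤ 1) (hy : ∀ i ≤ n, v (y.coeff i) ≤ 1) :
    v ((x * y).coeff n) ≤
      ((Finset.range (n + 1)).sup' ⟨0, Finset.mem_range.mpr (Nat.succ_pos n)⟩ fun i => v (x.coeff i)) *
        ((Finset.range (n + 1)).sup' ⟨0, Finset.mem_range.mpr (Nat.succ_pos n)⟩ fun j => v (y.coeff j)) := by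
  rw [WittVector.mul_coeff, WittVector.peval]
  refine v.map_aeval_int_le _ _ fun d hd => ?_
  obtain ⟨i, hi⟩ := WittVector.exists_mem_support_of_mem_support_wittMul p 0 hd
  obtain ⟨j, hj⟩ := WittVector.exists_mem_support_of_mem_support_wittMul p 1 hd
  have hint : ∀ s ∈ d.support, v (Function.uncurry ![x.coeff, y.coeff] s) ≤ 1 := by
    rintro ⟨b, m⟩ hs
    have hm := WittVector.le_of_mem_support_wittMul p hd hs
    fin_cases b
    exacts [hx m hm, hy m hm]
  refine (Finsupp.prod_pow_le_mul_of_le_one hint hi hj (by simp)).trans (mul_le_mul' ?_ ?_)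
  · exact Finset.le_sup' (fun i => v (x.coeff i))
      (Finset.mem_range_succ_iff.mpr (WittVector.le_of_mem_support_wittMul p hd hi))
  · exact Finset.le_sup' (fun j => v (y.coeff j))
      (Finset.mem_range_succ_iff.mpr (WittVector.le_of_mem_support_wittMul p hd hj))
end
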